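/- arXiv:1810.08367 — 2 statements merged into one kernel-verified Lean document; each statement's English description precedes it below -/
import Mathlib

section
/- Any equilibrium of the distributed secondary frequency controller dΩ_i/dt = −c_ω[∑_j a_ij(ω_i − ω_j) + g_i(ω_i − ω_ref)] − c_p ∑_j a_ij(D_i P_i − D_j P_j), with ω_i = ω_n − D_i P_i + Ω_i, on a connected undirected graph with some g_i > 0 and c_ω, c_p > 0, satisfies ω_i = ω_ref for all i and D_i P_i = D_j P_j for all i, j. -/
/-- Any synchronized equilibrium of the distributed secondary
frequency controller restores the reference frequency and achieves equal
droop-weighted active powers. -/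
theorem secondary_frequency_equilibrium
    (n : ℕ) (a : Fin n → Fin n → ℝ) (g : Fin n → ℝ)
    (cω cp ωn ωref : ℝ) (D P Ω ω : Fin n → ℝ)
    (hsymm : ∀ i j, a i j = a j i)
    (hnonneg : ∀ i j, 0 ≤ a i j)
    (hdiag : ∀ i, a i i = 0)
    (hconn : ∀ i j : Fin n, Relation.ReflTransGen (fun u v => 0 < a u v) i j)
    (hg : ∀ i, 0 ≤ g i) (hg1 : ∃ i, 0 < g i)
    (hcω : 0 < cω) (hcp : 0 < cp) (hD : ∀ i, 0 < D i)
    (hω : ∀ i, ω i = ωn - D i * P i + Ω i)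
    (hsync : ∀ i j, ω i = ω j)
    (heq : ∀ i, 0 =
      -(cω * ((∑ j, a i j * (ω i - ω j)) + g i * (ω i - ωref)))
      - cp * ∑ j, a i j * (D i * P i - D j * P j)) :
    (∀ i, ω i = ωref) ∧ (∀ i j, D i * P i = D j * P j) := by
  set x : Fin n → ℝ := fun i => D i * P i with hx
  obtain ⟨i0, hi0⟩ := hg1
  have hsum0 : ∀ i, (∑ j, a i j * (ω i - ω j)) = 0 := by
    intro i
    apply Finset.sum_eq_zero
    intro j _
    rw [hsync i j]; ring
  have heq' : ∀ i, cω * (g i * (ω i - ωref)) + cp * ∑ j, a i j * (x i - x j) = 0 := by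
    intro i
    have h := heq i
    rw [hsum0 i] at h
    simp only [hx]
    linarith
  -- total Laplacian sum is zero by symmetry
  have hT : ∑ i, ∑ j, a i j * (x i - x j) = 0 := by
    have key : ∑ i, ∑ j, a i j * (x i - x j) = -∑ i, ∑ j, a i j * (x i - x j) := by
      conv_lhs => rw [Finset.sum_comm]
      rw [← Finset.sum_neg_distrib]
      apply Finset.sum_congr rfl
      intro i _
      rw [← Finset.sum_neg_distrib]
      apply Finset.sum_congr rfl
      intro j _
      rw [hsymm]; ring
    linarith
  have h2 : ∑ i, (cω * (g i * (ω i - ωref)) + cp * ∑ j, a i j * (x i - x j)) = 0 :=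
    Finset.sum_eq_zero (fun i _ => heq' i)
  rw [Finset.sum_add_distrib, ← Finset.mul_sum, ← Finset.mul_sum, hT, mul_zero, add_zero] at h2
  -- all terms equal cω * g i * (ω i0 - ωref)
  have h3 : cω * ((ω i0 - ωref) * ∑ i, g i) = 0 := by
    rw [← h2]
    congr 1
    rw [Finset.mul_sum]
    apply Finset.sum_congr rfl
    intro i _
    rw [hsync i i0]; ring
  have hgsum : 0 < ∑ i, g i :=
    Finset.sum_pos' (fun i _ => hg i) ⟨i0, Finset.mem_univ i0, hi0⟩
  have hωi0 : ω i0 = ωref := by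
    rcases mul_eq_zero.mp h3 with h | h
    · exact absurd h (ne_of_gt hcω)
    · rcases mul_eq_zero.mp h with h' | h'
      · linarith
      · exact absurd h' (ne_of_gt hgsum)
  have hωall : ∀ i, ω i = ωref := fun i => (hsync i i0).trans hωi0
  refine ⟨hωall, ?_⟩
  -- each row of the Laplacian applied to x is zero
  have hrow : ∀ i, ∑ j, a i j * (x i - x j) = 0 := by
    intro i
    have h := heq' i
    rw [hωall i, sub_self, mul_zero, mul_zero, zero_add] at h
    exact (mul_eq_zero.mp h).resolve_left (ne_of_gt hcp)
  -- max argument: take a vertex of maximal x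
  rcases Nat.eq_zero_or_pos n with h0 | hn
  · subst h0; exact fun i => i.elim0
  have hne : (Finset.univ : Finset (Fin n)).Nonempty := ⟨⟨0, hn⟩, Finset.mem_univ _⟩
  obtain ⟨m, _, hm⟩ := Finset.exists_max_image Finset.univ x hne
  have hstep : ∀ u, x u = x m → ∀ v, 0 < a u v → x v = x m := by
    intro u hu v hav
    have hnn : ∀ j ∈ Finset.univ, 0 ≤ a u j * (x u - x j) := by
      intro j _
      apply mul_nonneg (hnonneg u j)
      have := hm j (Finset.mem_univ j)
      rw [hu]; linarith
    have hz := (Finset.sum_eq_zero_iff_of_nonneg hnn).mp (hrow u) v (Finset.mem_univ v)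
    rcases mul_eq_zero.mp hz with h | h
    · exact absurd h (ne_of_gt hav)
    · rw [← hu]; linarith
  have hall : ∀ j, x j = x m := by
    intro j
    have h := hconn m j
    induction h with
    | refl => rfl
    | tail _ e ih => exact hstep _ ih _ e
  intro i j
  exact (hall i).trans (hall j).symm
end

section
/- If x ∈ ℝ^n satisfies L x = 0 for the Laplacian L of a connected undirected graph and additionally g_i(x_i − r) = 0 holds where the g_i ≥ 0 are not all zero, then x_i = r for every i. -/
/-- If the pinned Laplacian consensus conditions hold on a connected
graph with not-all-zero nonnegative pinning gains, then every component equals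
the reference. -/
theorem pinned_consensus_reaches_reference
    (n : ℕ) (a : Fin n → Fin n → ℝ) (g : Fin n → ℝ) (r : ℝ) (x : Fin n → ℝ)
    (hsymm : ∀ i j, a i j = a j i)
    (hnonneg : ∀ i j, 0 ≤ a i j)
    (hdiag : ∀ i, a i i = 0)
    (hconn : ∀ i j : Fin n, Relation.ReflTransGen (fun u v => 0 < a u v) i j)
    (hg : ∀ i, 0 ≤ g i) (hg1 : ∃ i, g i ≠ 0)
    (hcond : ∀ i, (∑ j, a i j * (x i - x j)) + g i * (x i - r) = 0) :
    ∀ i, x i = r := by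
  set y : Fin n → ℝ := fun i => x i - r with hy
  -- sum of y i * (condition i) gives the energy identity
  have hsum : ∑ i, y i * ((∑ j, a i j * (y i - y j)) + g i * y i) = 0 := by
    apply Finset.sum_eq_zero
    intro i _
    have := hcond i
    have hx : ∀ j, x i - x j = y i - y j := by intro j; simp only [hy]; ring
    simp only [hx] at this
    have : (∑ j, a i j * (y i - y j)) + g i * y i = 0 := by
      simpa [hy] using this
    rw [this, mul_zero]
  have hexp : ∑ i, y i * ((∑ j, a i j * (y i - y j)) + g i * y i)
      = (∑ i, ∑ j, a i j * (y i * (y i - y j))) + ∑ i, g i * (y i)^2 := by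
    rw [← Finset.sum_add_distrib]
    congr 1; ext i
    rw [mul_add, Finset.mul_sum]
    congr 1
    · congr 1; ext j; ring
    · ring
  -- symmetrize the double sum
  have hdouble : (2:ℝ) * (∑ i, ∑ j, a i j * (y i * (y i - y j)))
      = ∑ i, ∑ j, a i j * (y i - y j)^2 := by
    have hswap : (∑ i, ∑ j, a i j * (y i * (y i - y j)))
        = ∑ i, ∑ j, a i j * (y j * (y j - y i)) := by
      rw [Finset.sum_comm]
      congr 1; ext i; congr 1; ext j
      rw [hsymm j i]
    rw [two_mul]
    nth_rewrite 2 [hswap]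
    rw [← Finset.sum_add_distrib]
    congr 1; ext i
    rw [← Finset.sum_add_distrib]
    congr 1; ext j
    ring
  -- so Q + 2P = 0 with Q, P sums of nonnegatives
  have hQP : (∑ i, ∑ j, a i j * (y i - y j)^2) + 2 * (∑ i, g i * (y i)^2) = 0 := by
    rw [← hdouble]
    have := hsum
    rw [hexp] at this
    linarith
  have hQnn : 0 ≤ ∑ i, ∑ j, a i j * (y i - y j)^2 :=
    Finset.sum_nonneg fun i _ => Finset.sum_nonneg fun j _ =>
      mul_nonneg (hnonneg i j) (sq_nonneg _)
  have hPnn : 0 ≤ ∑ i, g i * (y i)^2 :=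
    Finset.sum_nonneg fun i _ => mul_nonneg (hg i) (sq_nonneg _)
  have hQ0 : ∑ i, ∑ j, a i j * (y i - y j)^2 = 0 := by linarith
  have hP0 : ∑ i, g i * (y i)^2 = 0 := by linarith
  -- each edge term vanishes
  have hedge : ∀ u v : Fin n, 0 < a u v → y u = y v := by
    intro u v huv
    have hrow : ∀ i ∈ Finset.univ, (∑ j, a i j * (y i - y j)^2) = 0 := by
      have := (Finset.sum_eq_zero_iff_of_nonneg (fun i _ =>
        Finset.sum_nonneg fun j _ => mul_nonneg (hnonneg i j) (sq_nonneg _))).mp hQ0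
      exact this
    have hterm : a u v * (y u - y v)^2 = 0 := by
      have := (Finset.sum_eq_zero_iff_of_nonneg (fun j _ =>
        mul_nonneg (hnonneg u j) (sq_nonneg _))).mp (hrow u (Finset.mem_univ u))
      exact this v (Finset.mem_univ v)
    have h2 : (y u - y v)^2 = 0 := by
      rcases mul_eq_zero.mp hterm with h | h
      · exact absurd h (ne_of_gt huv)
      · exact h
    have := pow_eq_zero_iff (n := 2) (by norm_num) |>.mp h2
    linarith
  -- consensus along paths
  have hconst : ∀ i j : Fin n, y i = y j := by
    intro i j
    induction hconn i j with
    | refl => rfl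
    | tail _ h ih => exact ih.trans (hedge _ _ h)
  -- the pinned node forces y = 0
  obtain ⟨i0, hi0⟩ := hg1
  have hgi0 : 0 < g i0 := lt_of_le_of_ne (hg i0) (Ne.symm hi0)
  have hti0 : g i0 * (y i0)^2 = 0 := by
    have := (Finset.sum_eq_zero_iff_of_nonneg (fun i _ =>
      mul_nonneg (hg i) (sq_nonneg _))).mp hP0
    exact this i0 (Finset.mem_univ i0)
  have hy0 : y i0 = 0 := by
    rcases mul_eq_zero.mp hti0 with h | h
    · exact absurd h (ne_of_gt hgi0)
    · exact pow_eq_zero_iff (n := 2) (by norm_num) |>.mp h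
  intro i
  have : y i = 0 := (hconst i i0).trans hy0
  have : x i - r = 0 := this
  linarith
end
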